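/- Let d ≥ 3, a ∈ (0,1), and C₀ > 0. Let 𝒢 : (0,∞)×ℝ^d → ℝ be a kernel satisfying, for every t > 0: ∫_{ℝ^d} 𝒢(t,x) dx = 0, ‖𝒢(t)‖_{L^∞(ℝ^d)} ≤ C₀ t^{−(d−1)}(1+t)^{−2}, and ‖|·|^a 𝒢(t,·)‖_{L¹(ℝ^d)} ≤ C₀ (1+t)^{−(1−a)}. Then there is a constant C depending only on d, a, C₀ such that for every t ≥ 1 and every ℏ : [0,t]×ℝ^d → ℝ with ℏ(s) ∈ L¹(ℝ^d) and ‖ℏ(s)‖_{Ḃ^a_{∞,∞}} < ∞ for 0 ≤ s ≤ t, the space-time convolution (𝒢 ∗_{(t,x)} ℏ)(t,x) := ∫₀^t ∫_{ℝ^d} 𝒢(t−s, x−y) ℏ(s,y) dy ds satisfies ⟨t⟩^d ‖(𝒢 ∗_{(t,x)} ℏ)(t)‖_{L^∞_x} ≤ C sup_{0≤s≤t} ( ‖ℏ(s)‖_{L¹(ℝ^d)} + ⟨s⟩^{d+a} ‖ℏ(s)‖_{Ḃ^a_{∞,∞}} ). -/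

import Mathlib

open MeasureTheory Real Filter
open scoped ENNReal InnerProductSpace Topology

noncomputable section

abbrev Ed (d : ℕ) := EuclideanSpace ℝ (Fin d)

/-- The Japanese bracket `⟨t⟩ = √(1+t²)` of a real number. -/
def jt (t : ℝ) : ℝ := Real.sqrt (1 + t ^ 2)

/-- The Japanese bracket `⟨v⟩ = √(1+|v|²)` of a vector. -/
def jv {d : ℕ} (v : Ed d) : ℝ := Real.sqrt (1 + ‖v‖ ^ 2)

/-- The Bessel kernel of `(I - Δ)⁻¹` on `ℝ^d`. -/
def besselG2 (d : ℕ) (x : Ed d) : ℝ :=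
  (4 * Real.pi) ^ (-(d : ℝ) / 2) *
    ∫ τ in Set.Ioi (0 : ℝ),
      Real.exp (-τ) * Real.exp (-‖x‖ ^ 2 / (4 * τ)) * τ ^ ((2 - (d : ℝ)) / 2) / τ

/-- The screened electric field `E = (∇G₂) ∗ ρ`. -/
def screenedField (d : ℕ) (ρ : Ed d → ℝ) (x : Ed d) : Ed d :=
  ∫ y : Ed d, ρ y • gradient (besselG2 d) (x - y)

/-- Homogeneous Besov seminorm `Ḃ^a_{p,∞}` via difference quotients. -/
def besov {d : ℕ} {F : Type*} [NormedAddCommGroup F] (a : ℝ) (p : ℝ≥0∞)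
    (f : Ed d → F) : ℝ≥0∞ :=
  ⨆ (α : Ed d) (_ : α ≠ 0),
    eLpNorm (fun x => f x - f (x - α)) p volume / ENNReal.ofReal (‖α‖ ^ a)

/-- Uncurrying of a function of `(x, v)`. -/
def unc {d : ℕ} {F : Type*} (g : Ed d → Ed d → F) : Ed d × Ed d → F :=
  fun p => g p.1 p.2

/-- Full gradient `∇_{x,v} g` of a function of `(x, v)`. -/
def gradxv {d : ℕ} (g : Ed d → Ed d → ℝ) (x v : Ed d) : (Ed d × Ed d) →L[ℝ] ℝ :=
  fderiv ℝ (unc g) (x, v)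

/-- Full second derivative `∇²_{x,v} g` of a function of `(x, v)`. -/
def grad2xv {d : ℕ} (g : Ed d → Ed d → ℝ) (x v : Ed d) :
    (Ed d × Ed d) →L[ℝ] ((Ed d × Ed d) →L[ℝ] ℝ) :=
  fderiv ℝ (fun p => fderiv ℝ (unc g) p) (x, v)

/-- Weighted sup norm `‖⟨v⟩^k g‖_{L^∞_{x,v}}`. -/
def supW {d : ℕ} {F : Type*} [NormedAddCommGroup F] (k : ℝ) (g : Ed d → Ed d → F) : ℝ≥0∞ :=
  ⨆ (x : Ed d) (v : Ed d), ENNReal.ofReal (jv v ^ k * ‖g x v‖)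

/-- Weighted norm `‖g‖_{W^{2,∞}_k}`. -/
def W2K {d : ℕ} (k : ℝ) (g : Ed d → Ed d → ℝ) : ℝ≥0∞ :=
  supW k g + supW k (fun x v => gradxv g x v) + supW k (fun x v => grad2xv g x v)

/-- Weighted norm `‖g‖_{W^{1,∞}_k}`. -/
def W1K {d : ℕ} (k : ℝ) (g : Ed d → Ed d → ℝ) : ℝ≥0∞ :=
  supW k g + supW k (fun x v => gradxv g x v)

/-- `W^{1,1}(ℝ^d × ℝ^d)` norm. -/
def W11 {d : ℕ} (g : Ed d → Ed d → ℝ) : ℝ≥0∞ :=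
  (∫⁻ p : Ed d × Ed d, ENNReal.ofReal |unc g p|) +
  (∫⁻ p : Ed d × Ed d, ENNReal.ofReal ‖fderiv ℝ (unc g) p‖)

/-- `‖⟨v⟩^k g‖_{L¹_x L^∞_v}` norm. -/
def L1xLinfv {d : ℕ} {F : Type*} [NormedAddCommGroup F] (k : ℝ) (g : Ed d → Ed d → F) : ℝ≥0∞ :=
  ∫⁻ x : Ed d, ⨆ v : Ed d, ENNReal.ofReal (jv v ^ k * ‖g x v‖)

/-- `‖g‖_{L¹_v L^∞_x}` norm. -/
def L1vLinfx {d : ℕ} {F : Type*} [NormedAddCommGroup F] (g : Ed d → Ed d → F) : ℝ≥0∞ :=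
  ∫⁻ v : Ed d, ⨆ x : Ed d, ENNReal.ofReal ‖g x v‖

/-- `‖g‖_{L¹_x L¹_v}` norm. -/
def L1xL1v {d : ℕ} {F : Type*} [NormedAddCommGroup F] (g : Ed d → Ed d → F) : ℝ≥0∞ :=
  ∫⁻ x : Ed d, ∫⁻ v : Ed d, ENNReal.ofReal ‖g x v‖

/-- The fractional difference operator `D^a = D₁^a + D₂^a`. -/
def Dfrac {d : ℕ} {F : Type*} [NormedAddCommGroup F] (a : ℝ) (g : Ed d → Ed d → F)
    (x v : Ed d) : ℝ≥0∞ :=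
  (⨆ (z : Ed d) (_ : z ≠ 0), ENNReal.ofReal (‖g x v - g (x - z) v‖ / ‖z‖ ^ a)) +
  (⨆ (z : Ed d) (_ : z ≠ 0), ENNReal.ofReal (‖g x v - g x (v - z)‖ / ‖z‖ ^ a))

/-- The initial data norm `|||f|||₁`. -/
def dataNorm1 {d : ℕ} (k a : ℝ) (f : Ed d → Ed d → ℝ) : ℝ≥0∞ :=
  W11 f + W2K k f
    + L1xLinfv k (fun x v => gradxv f x v)
    + (∫⁻ x : Ed d, ⨆ v : Ed d,
        ENNReal.ofReal (jv v ^ k) * Dfrac a (fun x v => gradxv f x v) x v)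
    + L1xLinfv k (fun x v => grad2xv f x v)

/-- The initial data norm `|||f|||₂`. -/
def dataNorm2 {d : ℕ} (a : ℝ) (f : Ed d → Ed d → ℝ) : ℝ≥0∞ :=
  W11 f + L1vLinfx f + L1xLinfv 0 f
    + L1vLinfx (fun x v => gradxv f x v) + L1xLinfv 0 (fun x v => gradxv f x v)
    + (∫⁻ x : Ed d, ∫⁻ v : Ed d, Dfrac a f x v)
    + (∫⁻ x : Ed d, ⨆ v : Ed d, Dfrac a f x v)

/-- Net charge density `ρ = ∫ (f⁺ - f⁻) dv`. -/
def netDensity (d : ℕ) (fp fm : ℝ → Ed d → Ed d → ℝ) (t : ℝ) (x : Ed d) : ℝ :=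
  ∫ v : Ed d, (fp t x v - fm t x v)

/-- The `±`-species Vlasov equation with field `E` and background `μ`, for `t ∈ S`. -/
def VlasovEqOn (d : ℕ) (S : Set ℝ) (μ : Ed d → ℝ) (E : ℝ → Ed d → Ed d) (sgn : ℝ)
    (f : ℝ → Ed d → Ed d → ℝ) : Prop :=
  ∀ t ∈ S, ∀ (x v : Ed d),
    deriv (fun s => f s x v) t
      + ⟪v, gradient (fun y => f t y v) x⟫_ℝ
      + sgn * ⟪E t x, gradient (fun w => f t x w) v⟫_ℝ
      = -(sgn * ⟪E t x, gradient μ v⟫_ℝ)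

/-- The two-species screened Vlasov–Poisson perturbation system, for `t ∈ S`. -/
def IsVPSolutionOn (d : ℕ) (S : Set ℝ) (μ : Ed d → ℝ) (fp fm : ℝ → Ed d → Ed d → ℝ) : Prop :=
  VlasovEqOn d S μ (fun t => screenedField d (netDensity d fp fm t)) 1 fp ∧
  VlasovEqOn d S μ (fun t => screenedField d (netDensity d fp fm t)) (-1) fm

/-- The regularity assumption on the equilibrium `μ`. -/
def MuRegular (d : ℕ) (μ : Ed d → ℝ) : Prop :=
  (∀ N : ℝ, (d : ℝ) < N →
    (⨆ v : Ed d, ENNReal.ofReal (jv v ^ N *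
      (‖gradient μ v‖ + ‖fderiv ℝ (fun w => gradient μ w) v‖ +
        ‖fderiv ℝ (fun w => fderiv ℝ (fun u => gradient μ u) w) v‖))) < ⊤) ∧
  (∀ i : ℕ, i ≤ 2 * d + 7 →
    (∫⁻ v : Ed d, ENNReal.ofReal (jv v ^ ((d : ℝ) + 5) *
      ‖iteratedFDeriv ℝ i (fun w => gradient μ w) v‖)) < ⊤)

/-- Fourier transform of `∇_v μ`, componentwise. -/
def ftGradMu (d : ℕ) (μ : Ed d → ℝ) (ξ : Ed d) (i : Fin d) : ℂ :=
  ∫ v : Ed d, Complex.exp (-(Complex.I * Complex.ofReal ⟪v, ξ⟫_ℝ)) *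
    Complex.ofReal (gradient μ v i)

/-- The Penrose stability condition for the screened interaction. -/
def PenroseStable (d : ℕ) (μ : Ed d → ℝ) : Prop :=
  ∃ κ : ℝ, 0 < κ ∧ ∀ (ξ : Ed d) (z : ℂ), z.im < 0 →
    κ ≤ ‖(1 + 2 * ∫ s in Set.Ioi (0 : ℝ),
      Complex.exp (-(Complex.I * z * s)) *
        (Complex.I / (1 + Complex.ofReal ‖ξ‖ ^ 2)) *
        ∑ i : Fin d, Complex.ofReal (ξ i) * ftGradMu d μ (s • ξ) i : ℂ)‖

/-- Membership in `C(S; W^{1,1} ∩ W^{1,∞}_{k-1}) ∩ L^∞(S; W^{2,∞}_k)`. -/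
def InSolClass (d : ℕ) (k : ℝ) (S : Set ℝ) (f : ℝ → Ed d → Ed d → ℝ) : Prop :=
  (∀ t ∈ S, W11 (f t) < ⊤ ∧ W1K (k - 1) (f t) < ⊤) ∧
  (∀ t ∈ S,
    Filter.Tendsto (fun s => W11 (fun x v => f s x v - f t x v) +
        W1K (k - 1) (fun x v => f s x v - f t x v))
      (nhdsWithin t S) (nhds 0)) ∧
  (⨆ (t : ℝ) (_ : t ∈ S), W2K k (f t)) < ⊤

/-- Spatial gradient of a scalar function on `ℝ^d`, as a vector field. -/
def gradx {d : ℕ} (g : Ed d → ℝ) : Ed d → Ed d := fun x => gradient g x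

/-- The bootstrap bounds on the net charge density with parameter `ε`. -/
def Bootstrap (d : ℕ) (a γ ε T : ℝ) (ρ : ℝ → Ed d → ℝ) : Prop :=
  ∀ t ∈ Set.Icc (0 : ℝ) T,
    eLpNorm (ρ t) ⊤ volume ≤ ENNReal.ofReal (ε * jt t ^ (-(d : ℝ) + γ)) ∧
    besov a ⊤ (ρ t) ≤ ENNReal.ofReal (ε * jt t ^ (-((d : ℝ) + a) + γ)) ∧
    besov a 1 (ρ t) ≤ ENNReal.ofReal (ε * jt t ^ (-a + γ)) ∧
    eLpNorm (gradx (ρ t)) ⊤ volume ≤ ENNReal.ofReal (ε * jt t ^ (-((d : ℝ) + 1) + γ)) ∧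
    eLpNorm (gradx (ρ t)) 1 volume ≤ ENNReal.ofReal (ε * jt t ^ (-1 + γ))

/-- `Y^±_{s,t}` solves the straightened-characteristics fixed point equation on `[0,T]`. -/
def IsYfield (d : ℕ) (T : ℝ) (E : ℝ → Ed d → Ed d) (sgn : ℝ)
    (Y : ℝ → ℝ → Ed d → Ed d → Ed d) : Prop :=
  ∀ s t : ℝ, 0 ≤ s → s ≤ t → t ≤ T → ∀ x v : Ed d,
    Y s t x v = sgn • ∫ τ in s..t, (τ - s) • E τ (x + τ • v + Y τ t x v)

/-- `W^±_{s,t}` associated with `Y^±_{s,t}`. -/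
def Wfield (d : ℕ) (E : ℝ → Ed d → Ed d) (sgn : ℝ)
    (Y : ℝ → ℝ → Ed d → Ed d → Ed d) (s t : ℝ) (x v : Ed d) : Ed d :=
  (-sgn) • ∫ τ in s..t, E τ (x + τ • v + Y τ t x v)

/-- The characteristic flow with terminal data `(x,v)` at time `t`, on `[0,T]`. -/
def IsCharFlow (d : ℕ) (T : ℝ) (E : ℝ → Ed d → Ed d) (sgn : ℝ)
    (X V : ℝ → ℝ → Ed d → Ed d → Ed d) : Prop :=
  ∀ t ∈ Set.Icc (0 : ℝ) T, ∀ (x v : Ed d),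
    X t t x v = x ∧ V t t x v = v ∧
    ∀ s ∈ Set.Icc (0 : ℝ) T,
      HasDerivAt (fun σ => X σ t x v) (V s t x v) s ∧
      HasDerivAt (fun σ => V σ t x v) (sgn • E s (X s t x v)) s


/-- Space-time convolution `(𝒢 ∗_{(t,x)} ℏ)(t,x) = ∫₀ᵗ ∫ 𝒢(t-s, x-y) ℏ(s,y) dy ds`. -/
def stConv (d : ℕ) (G h : ℝ → Ed d → ℝ) (t : ℝ) (x : Ed d) : ℝ :=
  ∫ s in (0 : ℝ)..t, ∫ y : Ed d, G (t - s) (x - y) * h s y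

open Set

/-!
Split the time integral at `t / 2`.

For `s ≤ t / 2` the kernel is evaluated at time `t - s ≥ t / 2`, where its sup bound
`(t - s)^{-(d-1)} (1 + t - s)^{-2}`, times `‖ℏ(s)‖_{L¹}` and integrated over an interval of
length `t / 2`, is `≲ t^{-d}`.

For `s ≥ t / 2` the mean of `𝒢(t - s)` vanishes, so `ℏ(s, x - z)` may be replaced by
`ℏ(s, x - z) - ℏ(s, x₀)`. The Hölder bound `|ℏ(s, y) - ℏ(s, x₀)| ≤ [ℏ(s)]_a |y - x₀|^a` then
costs `‖|·|^a 𝒢(t - s)‖_{L¹} ≲ (1 + t - s)^{a-1}` times `⟨s⟩^{-(d+a)}`, and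
`∫_{t/2}^t (1 + t - s)^{a-1} ds ≲ ⟨t⟩^a`. The Besov seminorm only bounds differences almost
everywhere; by Fubini, almost every `x₀` satisfies the Hölder bound against almost every `y`, so
such `x₀` are dense, and letting `x₀ → x` gives the bound at every point `x`.
-/

lemma jt_pos (t : ℝ) : 0 < jt t := Real.sqrt_pos.2 (by positivity)

lemma jt_le_jt {s t : ℝ} (hs : 0 ≤ s) (hst : s ≤ t) : jt s ≤ jt t :=
  Real.sqrt_le_sqrt (by nlinarith)

lemma jt_le_two_mul {t : ℝ} (ht : 1 ≤ t) : jt t ≤ 2 * t := by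
  rw [jt, ← Real.sqrt_sq (by linarith : 0 ≤ 2 * t)]
  exact Real.sqrt_le_sqrt (by nlinarith)

lemma two_mul_jt (t : ℝ) : 2 * jt t = √(4 * (1 + t ^ 2)) := by
  rw [jt, Real.sqrt_mul' 4 (by positivity), show (4 : ℝ) = 2 ^ 2 by norm_num,
    Real.sqrt_sq zero_le_two]

lemma jt_le_two_mul_jt_half (t : ℝ) : jt t ≤ 2 * jt (t / 2) := by
  rw [two_mul_jt]
  exact Real.sqrt_le_sqrt (by nlinarith)

lemma one_add_le_two_mul_jt (t : ℝ) : 1 + t ≤ 2 * jt t := by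
  rw [two_mul_jt]
  exact Real.le_sqrt_of_sq_le (by nlinarith [sq_nonneg (t - 1)])

lemma inv_rpow_le_div_rpow_of_le_mul {x y c p : ℝ} (hy : 0 < y) (hc : 0 < c) (hp : 0 ≤ p)
    (h : y ≤ c * x) : (x ^ p)⁻¹ ≤ c ^ p / y ^ p := by
  rw [← inv_div, ← Real.div_rpow hy.le hc.le]
  exact inv_anti₀ (Real.rpow_pos_of_pos (div_pos hy hc) p)
    (Real.rpow_le_rpow (div_pos hy hc).le (by rwa [div_le_iff₀' hc]) hp)

lemma rpow_neg_sub_one_mul_one_add_rpow_neg_two_le {d u τ : ℝ} (hd : -1 ≤ d) (hu : 0 < u)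
    (huτ : u ≤ τ) : τ ^ (-(d - 1)) * (1 + τ) ^ (-2 : ℝ) ≤ (u ^ (d + 1))⁻¹ := by
  have hτ : 0 < τ := hu.trans_le huτ
  calc τ ^ (-(d - 1)) * (1 + τ) ^ (-2 : ℝ) ≤ τ ^ (-(d - 1)) * τ ^ (-2 : ℝ) :=
        mul_le_mul_of_nonneg_left (Real.rpow_le_rpow_of_nonpos hτ (by linarith) (by norm_num))
          (Real.rpow_nonneg hτ.le _)
    _ = (τ ^ (d + 1))⁻¹ := by
        rw [← Real.rpow_add hτ, ← Real.rpow_neg hτ.le]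
        ring_nf
    _ ≤ (u ^ (d + 1))⁻¹ :=
        inv_anti₀ (Real.rpow_pos_of_pos hu _) (Real.rpow_le_rpow hu.le huτ (by linarith))

lemma one_add_half_rpow_div_jt_half_rpow_le {d a t : ℝ} (hd : 0 ≤ d) (ha : 0 ≤ a) (ht : 0 ≤ t) :
    (1 + t / 2) ^ a / jt (t / 2) ^ (d + a) ≤ 2 ^ (d + a) / jt t ^ d := by
  have hj := jt_pos (t / 2)
  calc (1 + t / 2) ^ a / jt (t / 2) ^ (d + a)
      ≤ (2 * jt (t / 2)) ^ a / jt (t / 2) ^ (d + a) := by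
        gcongr
        exact one_add_le_two_mul_jt _
    _ = 2 ^ a * (jt (t / 2) ^ d)⁻¹ := by
        rw [Real.mul_rpow zero_le_two hj.le, Real.rpow_add hj]
        field_simp
    _ ≤ 2 ^ a * (2 ^ d / jt t ^ d) := by
        gcongr
        exact inv_rpow_le_div_rpow_of_le_mul (jt_pos t) two_pos hd (jt_le_two_mul_jt_half t)
    _ = 2 ^ (d + a) / jt t ^ d := by
        rw [Real.rpow_add two_pos]
        ring

lemma inv_half_rpow_add_one_mul_half_le {d t : ℝ} (hd : 0 ≤ d) (ht : 1 ≤ t) :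
    ((t / 2) ^ (d + 1))⁻¹ * (t / 2) ≤ 4 ^ d / jt t ^ d := by
  rw [Real.rpow_add_one (by positivity), mul_inv, inv_mul_cancel_right₀ (by positivity)]
  exact inv_rpow_le_div_rpow_of_le_mul (jt_pos t) four_pos hd (by linarith [jt_le_two_mul ht])

lemma ae_norm_le_of_eLpNorm_top_le {α F : Type*} [MeasurableSpace α] {μ : Measure α}
    [NormedAddCommGroup F] {f : α → F} {c : ℝ} (hc : 0 ≤ c)
    (h : eLpNorm f ⊤ μ ≤ ENNReal.ofReal c) : ∀ᵐ x ∂μ, ‖f x‖ ≤ c := by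
  filter_upwards [ae_le_eLpNormEssSup (f := f) (μ := μ)] with x hx
  rw [eLpNorm_exponent_top] at h
  rw [← ENNReal.ofReal_le_ofReal_iff hc, ofReal_norm]
  exact hx.trans h

lemma integrable_and_integral_le_of_lintegral_le {α : Type*} [MeasurableSpace α]
    {μ : Measure α} {f : α → ℝ} (hf : AEStronglyMeasurable f μ) (hf0 : 0 ≤ᵐ[μ] f) {c : ℝ}
    (hc : 0 ≤ c) (h : ∫⁻ x, ENNReal.ofReal (f x) ∂μ ≤ ENNReal.ofReal c) :
    Integrable f μ ∧ ∫ x, f x ∂μ ≤ c := by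
  have hint : Integrable f μ :=
    ⟨hf, (hasFiniteIntegral_iff_ofReal hf0).2 (h.trans_lt ENNReal.ofReal_lt_top)⟩
  refine ⟨hint, ?_⟩
  rwa [← ENNReal.ofReal_le_ofReal_iff hc, ofReal_integral_eq_lintegral_ofReal hint hf0]

lemma integral_abs_le_toReal_of_eLpNorm_one_le {α : Type*} [MeasurableSpace α] {μ : Measure α}
    {f : α → ℝ} (hf : Integrable f μ) {M : ℝ≥0∞} (hM : M ≠ ⊤) (h : eLpNorm f 1 μ ≤ M) :
    ∫ x, |f x| ∂μ ≤ M.toReal := by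
  simp_rw [← Real.norm_eq_abs]
  rw [integral_norm_eq_lintegral_enorm hf.1, ← eLpNorm_one_eq_lintegral_enorm]
  exact ENNReal.toReal_mono hM h

lemma ENNReal.toReal_le_div_of_ofReal_mul_le {w : ℝ} {B M : ℝ≥0∞} (hw : 0 < w) (hM : M ≠ ⊤)
    (h : ENNReal.ofReal w * B ≤ M) : B.toReal ≤ M.toReal / w := by
  rw [le_div_iff₀ hw, mul_comm, ← ENNReal.toReal_ofReal hw.le, ← ENNReal.toReal_mul]
  exact ENNReal.toReal_mono hM h

section Besov

variable {d : ℕ} {F : Type*} [NormedAddCommGroup F] {a : ℝ}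

lemma besov_congr_ae {p : ℝ≥0∞} {f g : Ed d → F} (hfg : f =ᵐ[volume] g) :
    besov a p f = besov a p g := by
  refine iSup_congr fun α => iSup_congr fun _ => ?_
  have hshift : (fun x => f (x - α)) =ᵐ[volume] fun x => g (x - α) :=
    (measurePreserving_sub_right volume α).quasiMeasurePreserving.ae_eq_comp hfg
  congr 1
  refine eLpNorm_congr_ae ?_
  filter_upwards [hfg, hshift] with x h₁ h₂
  rw [h₁, h₂]

lemma ae_norm_sub_le_besov {f : Ed d → F} (hf : besov a ⊤ f ≠ ⊤) (α : Ed d) :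
    ∀ᵐ x, ‖f x - f (x - α)‖ ≤ (besov a ⊤ f).toReal * ‖α‖ ^ a := by
  rcases eq_or_ne α 0 with rfl | hα
  · exact ae_of_all _ fun x => by
      simpa using mul_nonneg ENNReal.toReal_nonneg (Real.rpow_nonneg le_rfl a)
  refine ae_norm_le_of_eLpNorm_top_le (by positivity) ?_
  have hpos : 0 < ‖α‖ ^ a := Real.rpow_pos_of_pos (norm_pos_iff.2 hα) a
  rw [ENNReal.ofReal_mul ENNReal.toReal_nonneg, ENNReal.ofReal_toReal hf,
    ← ENNReal.div_le_iff (ENNReal.ofReal_pos.2 hpos).ne' ENNReal.ofReal_ne_top]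
  exact le_iSup₂ (f := fun (β : Ed d) (_ : β ≠ 0) =>
    eLpNorm (fun x => f x - f (x - β)) ⊤ volume / ENNReal.ofReal (‖β‖ ^ a)) α hα

lemma ae_ae_norm_sub_le_besov {f : Ed d → F} (hfm : StronglyMeasurable f)
    (hf : besov a ⊤ f ≠ ⊤) :
    ∀ᵐ x, ∀ᵐ α, ‖f x - f (x - α)‖ ≤ (besov a ⊤ f).toReal * ‖α‖ ^ a := by
  refine (Measure.ae_ae_comm ?_).2 (ae_of_all _ (ae_norm_sub_le_besov hf))
  exact measurableSet_le ((hfm.comp_measurable measurable_fst).sub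
    (hfm.comp_measurable (measurable_fst.sub measurable_snd))).norm.measurable (by fun_prop)

end Besov

section Convolution

variable {E : Type*} [NormedAddCommGroup E] [MeasurableSpace E] [BorelSpace E]
  {μ : Measure E} [μ.IsAddLeftInvariant] [μ.IsNegInvariant] {g f : E → ℝ}

lemma abs_integral_mul_le_of_ae_norm_le {c : ℝ} (hg : ∀ᵐ z ∂μ, ‖g z‖ ≤ c)
    (hf : Integrable f μ) (x : E) :
    |∫ y, g (x - y) * f y ∂μ| ≤ c * ∫ y, |f y| ∂μ := by
  rw [← integral_const_mul, ← Real.norm_eq_abs]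
  refine norm_integral_le_of_norm_le (hf.abs.const_mul c) ?_
  filter_upwards [(Measure.measurePreserving_sub_left μ x).quasiMeasurePreserving.ae hg]
    with y hy
  rw [norm_mul, Real.norm_eq_abs (f y)]
  exact mul_le_mul_of_nonneg_right hy (abs_nonneg _)

variable {a b : ℝ}

lemma ae_abs_sub_le_of_ae_norm_sub_le (ha0 : 0 ≤ a) (ha1 : a ≤ 1) (hb : 0 ≤ b) {x₀ : E}
    (hx₀ : ∀ᵐ α ∂μ, ‖f x₀ - f (x₀ - α)‖ ≤ b * ‖α‖ ^ a) (x : E) :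
    ∀ᵐ y ∂μ, |f y - f x₀| ≤ b * (‖x - y‖ ^ a + ‖x - x₀‖ ^ a) := by
  filter_upwards [(Measure.measurePreserving_sub_left μ x₀).quasiMeasurePreserving.ae hx₀]
    with y hy
  rw [sub_sub_cancel, norm_sub_rev, Real.norm_eq_abs] at hy
  refine hy.trans (mul_le_mul_of_nonneg_left ?_ hb)
  calc ‖x₀ - y‖ ^ a ≤ (‖x - y‖ + ‖x - x₀‖) ^ a := by
        refine Real.rpow_le_rpow (norm_nonneg _) ?_ ha0
        exact (norm_sub_le_norm_sub_add_norm_sub x₀ x y).trans_eq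
          (by rw [norm_sub_rev x₀ x, add_comm])
    _ ≤ ‖x - y‖ ^ a + ‖x - x₀‖ ^ a :=
        Real.rpow_add_le_add_rpow (norm_nonneg _) (norm_nonneg _) ha0 ha1

lemma abs_integral_mul_le_add_of_integral_eq_zero (ha0 : 0 ≤ a) (ha1 : a ≤ 1)
    (hb : 0 ≤ b) (hg : Integrable g μ) (hg0 : ∫ z, g z ∂μ = 0)
    (hga : Integrable (fun z => ‖z‖ ^ a * |g z|) μ) (hf : AEStronglyMeasurable f μ) {x₀ : E}
    (hx₀ : ∀ᵐ α ∂μ, ‖f x₀ - f (x₀ - α)‖ ≤ b * ‖α‖ ^ a) (x : E) :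
    |∫ y, g (x - y) * f y ∂μ|
      ≤ b * (∫ z, ‖z‖ ^ a * |g z| ∂μ + ‖x - x₀‖ ^ a * ∫ z, |g z| ∂μ) := by
  set δ := ‖x - x₀‖
  have hmaj : Integrable (fun y => b * (‖x - y‖ ^ a * |g (x - y)| + δ ^ a * |g (x - y)|)) μ :=
    ((hga.comp_sub_left x).add ((hg.abs.comp_sub_left x).const_mul _)).const_mul b
  have hbound : ∀ᵐ y ∂μ, ‖g (x - y) * (f y - f x₀)‖
      ≤ b * (‖x - y‖ ^ a * |g (x - y)| + δ ^ a * |g (x - y)|) := by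
    filter_upwards [ae_abs_sub_le_of_ae_norm_sub_le ha0 ha1 hb hx₀ x] with y hy
    rw [Real.norm_eq_abs, abs_mul]
    nlinarith [mul_le_mul_of_nonneg_left hy (abs_nonneg (g (x - y)))]
  have hint : Integrable (fun y => g (x - y) * (f y - f x₀)) μ :=
    hmaj.mono' (((hg.1.comp_measurePreserving (Measure.measurePreserving_sub_left μ x))).mul
      (hf.sub aestronglyMeasurable_const)) hbound
  have hmean : ∫ y, g (x - y) * f y ∂μ = ∫ y, g (x - y) * (f y - f x₀) ∂μ := by
    have h0 : ∫ y, g (x - y) * f x₀ ∂μ = 0 := by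
      rw [integral_mul_const, integral_sub_left_eq_self g μ x, hg0, zero_mul]
    rw [← add_zero (∫ y, g (x - y) * (f y - f x₀) ∂μ), ← h0,
      ← integral_add hint ((hg.comp_sub_left x).mul_const _)]
    congr 1 with y
    ring
  rw [hmean, ← Real.norm_eq_abs]
  refine (norm_integral_le_of_norm_le hmaj hbound).trans_eq ?_
  rw [integral_const_mul, integral_add (hga.comp_sub_left x)
    ((hg.abs.comp_sub_left x).const_mul _), integral_const_mul,
    integral_sub_left_eq_self (fun z => ‖z‖ ^ a * |g z|) μ x,
    integral_sub_left_eq_self (fun z => |g z|) μ x]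

lemma abs_integral_mul_le_of_integral_eq_zero [μ.IsOpenPosMeasure] (ha0 : 0 < a) (ha1 : a ≤ 1)
    (hb : 0 ≤ b) (hg : Integrable g μ) (hg0 : ∫ z, g z ∂μ = 0)
    (hga : Integrable (fun z => ‖z‖ ^ a * |g z|) μ) (hf : AEStronglyMeasurable f μ)
    (hhol : ∀ᵐ x₀ ∂μ, ∀ᵐ α ∂μ, ‖f x₀ - f (x₀ - α)‖ ≤ b * ‖α‖ ^ a) (x : E) :
    |∫ y, g (x - y) * f y ∂μ| ≤ b * ∫ z, ‖z‖ ^ a * |g z| ∂μ := by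
  set S := {x₀ | ∀ᵐ α ∂μ, ‖f x₀ - f (x₀ - α)‖ ≤ b * ‖α‖ ^ a}
  have : (𝓝[S] x).NeBot := mem_closure_iff_nhdsWithin_neBot.1 (Measure.dense_of_ae hhol x)
  have hδ : Tendsto (fun x₀ => ‖x - x₀‖ ^ a) (𝓝[S] x) (𝓝 0) := by
    have hcont : Continuous fun x₀ : E => ‖x - x₀‖ ^ a :=
      (continuous_const.sub continuous_id).norm.rpow_const fun _ => Or.inr ha0.le
    simpa [Real.zero_rpow ha0.ne'] using (hcont.tendsto x).mono_left nhdsWithin_le_nhds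
  have hlim := (tendsto_const_nhds (x := ∫ z, ‖z‖ ^ a * |g z| ∂μ)).add
    (hδ.mul_const (∫ z, |g z| ∂μ)) |>.const_mul b
  rw [zero_mul, add_zero] at hlim
  exact ge_of_tendsto hlim (eventually_nhdsWithin_of_forall fun x₀ hx₀ =>
    abs_integral_mul_le_add_of_integral_eq_zero ha0.le ha1 hb hg hg0 hga hf hx₀ x)

end Convolution

def IsDispersiveKernel (d : ℕ) (a C₀ : ℝ) (G : ℝ → Ed d → ℝ) : Prop :=
  ∀ t : ℝ, 0 < t →
    Integrable (G t) ∧ (∫ x : Ed d, G t x) = 0 ∧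
    eLpNorm (G t) ⊤ volume
      ≤ ENNReal.ofReal (C₀ * t ^ (-((d : ℝ) - 1)) * (1 + t) ^ (-2 : ℝ)) ∧
    (∫⁻ x : Ed d, ENNReal.ofReal (‖x‖ ^ a * |G t x|)) ≤ ENNReal.ofReal (C₀ * (1 + t) ^ (a - 1))

namespace IsDispersiveKernel

variable {d : ℕ} {a C₀ τ : ℝ} {G : ℝ → Ed d → ℝ} {f : Ed d → ℝ}

lemma abs_integral_mul_le_inv_rpow (hG : IsDispersiveKernel d a C₀ G) (hC₀ : 0 ≤ C₀) {u m : ℝ}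
    (hu : 0 < u) (huτ : u ≤ τ) (hf : Integrable f) (hfm : ∫ y, |f y| ≤ m) (x : Ed d) :
    |∫ y, G τ (x - y) * f y| ≤ C₀ * m * (u ^ ((d : ℝ) + 1))⁻¹ := by
  have hτ : 0 < τ := hu.trans_le huτ
  calc |∫ y, G τ (x - y) * f y|
      ≤ C₀ * τ ^ (-((d : ℝ) - 1)) * (1 + τ) ^ (-2 : ℝ) * ∫ y, |f y| :=
        abs_integral_mul_le_of_ae_norm_le (ae_norm_le_of_eLpNorm_top_le
          (mul_nonneg (mul_nonneg hC₀ (Real.rpow_nonneg hτ.le _))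
            (Real.rpow_nonneg (by linarith) _)) (hG τ hτ).2.2.1) hf x
    _ = C₀ * (τ ^ (-((d : ℝ) - 1)) * (1 + τ) ^ (-2 : ℝ)) * ∫ y, |f y| := by ring
    _ ≤ C₀ * (u ^ ((d : ℝ) + 1))⁻¹ * m := by
        gcongr
        exact rpow_neg_sub_one_mul_one_add_rpow_neg_two_le
          (by linarith [Nat.cast_nonneg (α := ℝ) d]) hu huτ
    _ = C₀ * m * (u ^ ((d : ℝ) + 1))⁻¹ := by ring

lemma abs_integral_mul_le_besov (hG : IsDispersiveKernel d a C₀ G) (hC₀ : 0 ≤ C₀)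
    (ha0 : 0 < a) (ha1 : a ≤ 1) (hτ : 0 < τ) (hf : AEStronglyMeasurable f)
    (hfb : besov a ⊤ f ≠ ⊤) (x : Ed d) :
    |∫ y, G τ (x - y) * f y| ≤ C₀ * (1 + τ) ^ (a - 1) * (besov a ⊤ f).toReal := by
  obtain ⟨hint, hmean, -, hmom⟩ := hG τ hτ
  obtain ⟨hmomi, hmomle⟩ := integrable_and_integral_le_of_lintegral_le
    (f := fun z => ‖z‖ ^ a * |G τ z|)
    ((by fun_prop : Measurable fun z : Ed d => ‖z‖ ^ a).aestronglyMeasurable.mul hint.1.norm)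
    (ae_of_all _ fun z => by positivity) (mul_nonneg hC₀ (Real.rpow_nonneg (by linarith) _))
    hmom
  have hbes : besov a ⊤ (hf.mk f) = besov a ⊤ f := (besov_congr_ae hf.ae_eq_mk).symm
  have hhol := ae_ae_norm_sub_le_besov hf.stronglyMeasurable_mk (hbes ▸ hfb)
  rw [hbes] at hhol
  calc |∫ y, G τ (x - y) * f y| = |∫ y, G τ (x - y) * hf.mk f y| := by
        rw [integral_congr_ae (g := fun y => G τ (x - y) * hf.mk f y)
          (hf.ae_eq_mk.mono fun y hy => by simp only [hy])]
    _ ≤ (besov a ⊤ f).toReal * ∫ z, ‖z‖ ^ a * |G τ z| :=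
        abs_integral_mul_le_of_integral_eq_zero ha0 ha1 ENNReal.toReal_nonneg hint hmean hmomi
          hf.stronglyMeasurable_mk.aestronglyMeasurable hhol x
    _ ≤ C₀ * (1 + τ) ^ (a - 1) * (besov a ⊤ f).toReal := by
        rw [mul_comm]
        gcongr

end IsDispersiveKernel

lemma integral_one_add_sub_rpow {t a : ℝ} (ha : 0 < a) :
    ∫ s in (t / 2)..t, (1 + (t - s)) ^ (a - 1) = ((1 + t / 2) ^ a - 1) / a := by
  rw [intervalIntegral.integral_comp_sub_left (fun u => (1 + u) ^ (a - 1)),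
    intervalIntegral.integral_comp_add_left (fun u => u ^ (a - 1)),
    integral_rpow (Or.inl (by linarith))]
  simp only [sub_self, add_zero, sub_add_cancel, Real.one_rpow]
  ring_nf

lemma abs_intervalIntegral_le_of_near_far {F : ℝ → ℝ} {t a A c : ℝ} (ht : 0 < t)
    (ha : 0 < a) (hA : 0 ≤ A) (hc : 0 ≤ c) (hnear : ∀ s ∈ Ioc 0 (t / 2), |F s| ≤ A)
    (hfar : ∀ s ∈ Ioo (t / 2) t, |F s| ≤ c * (1 + (t - s)) ^ (a - 1)) :
    |∫ s in 0..t, F s| ≤ A * (t / 2) + c * (1 + t / 2) ^ a / a := by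
  by_cases hF : IntervalIntegrable F volume 0 t
  swap
  · -- `F` is not assumed integrable: then the integral is the junk value `0`
    rw [intervalIntegral.integral_undef hF, abs_zero]
    positivity
  have hmid : t / 2 ∈ uIcc 0 t := by rw [uIcc_of_le ht.le]; constructor <;> linarith
  rw [← intervalIntegral.integral_add_adjacent_intervals
    (hF.mono_set (uIcc_subset_uIcc_left hmid)) (hF.mono_set (uIcc_subset_uIcc_right hmid))]
  refine (abs_add_le _ _).trans (add_le_add ?_ ?_)
  · have := intervalIntegral.norm_integral_le_of_norm_le_const (a := 0) (b := t / 2) (f := F)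
      fun s hs => hnear s (by rwa [uIoc_of_le (by linarith)] at hs)
    rwa [sub_zero, abs_of_pos (by linarith)] at this
  have hint : IntervalIntegrable (fun s => c * (1 + (t - s)) ^ (a - 1)) volume (t / 2) t := by
    refine (continuousOn_const.mul
      (ContinuousOn.rpow_const (by fun_prop) fun s hs => ?_)).intervalIntegrable
    rw [uIcc_of_le (by linarith)] at hs
    exact Or.inl (by linarith [hs.2])
  calc |∫ s in (t / 2)..t, F s| ≤ ∫ s in (t / 2)..t, c * (1 + (t - s)) ^ (a - 1) := by
        rw [← Real.norm_eq_abs]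
        refine intervalIntegral.norm_integral_le_of_norm_le (by linarith) ?_ hint
        filter_upwards [Measure.ae_ne volume t] with s hst hs
        exact hfar s ⟨hs.1, lt_of_le_of_ne hs.2 hst⟩
    _ = c * (((1 + t / 2) ^ a - 1) / a) := by
        rw [intervalIntegral.integral_const_mul, integral_one_add_sub_rpow ha]
    _ ≤ c * (1 + t / 2) ^ a / a := by
        rw [mul_div_assoc]
        gcongr
        linarith

lemma abs_stConv_le {d : ℕ} {a C₀ t m : ℝ} {G h : ℝ → Ed d → ℝ} (ha0 : 0 < a) (ha1 : a ≤ 1)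
    (hC₀ : 0 ≤ C₀) (hG : IsDispersiveKernel d a C₀ G) (ht : 1 ≤ t)
    (hh : ∀ s ∈ Icc 0 t, Integrable (h s) ∧ besov a ⊤ (h s) < ⊤)
    (hL1 : ∀ s ∈ Icc 0 t, ∫ y, |h s y| ≤ m)
    (hBes : ∀ s ∈ Icc 0 t, (besov a ⊤ (h s)).toReal ≤ m / jt s ^ ((d : ℝ) + a)) (x : Ed d) :
    |stConv d G h t x| ≤ C₀ * (4 ^ (d : ℝ) + 2 ^ ((d : ℝ) + a) / a) * m / jt t ^ (d : ℝ) := by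
  have ht0 : 0 < t := by linarith
  have hm : 0 ≤ m := (integral_nonneg fun _ => abs_nonneg _).trans (hL1 0 ⟨le_rfl, ht0.le⟩)
  have hnear : ∀ s ∈ Ioc 0 (t / 2), |∫ y, G (t - s) (x - y) * h s y|
      ≤ C₀ * m * ((t / 2) ^ ((d : ℝ) + 1))⁻¹ := fun s hs =>
    have hsI : s ∈ Icc 0 t := ⟨hs.1.le, by linarith [hs.2]⟩
    hG.abs_integral_mul_le_inv_rpow hC₀ (by linarith) (by linarith [hs.2]) (hh s hsI).1
      (hL1 s hsI) x
  have hfar : ∀ s ∈ Ioo (t / 2) t, |∫ y, G (t - s) (x - y) * h s y|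
      ≤ C₀ * m / jt (t / 2) ^ ((d : ℝ) + a) * (1 + (t - s)) ^ (a - 1) := by
    intro s hs
    have hsI : s ∈ Icc 0 t := ⟨by linarith [hs.1], hs.2.le⟩
    refine (hG.abs_integral_mul_le_besov hC₀ ha0 ha1 (by linarith [hs.2]) (hh s hsI).1.1
      (hh s hsI).2.ne x).trans ?_
    have hjs : jt (t / 2) ^ ((d : ℝ) + a) ≤ jt s ^ ((d : ℝ) + a) :=
      Real.rpow_le_rpow (jt_pos _).le (jt_le_jt (by linarith) hs.1.le) (by positivity)
    calc C₀ * (1 + (t - s)) ^ (a - 1) * (besov a ⊤ (h s)).toReal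
        ≤ C₀ * (1 + (t - s)) ^ (a - 1) * (m / jt (t / 2) ^ ((d : ℝ) + a)) := by
          gcongr
          · exact mul_nonneg hC₀ (Real.rpow_nonneg (by linarith [hs.2]) _)
          · exact (hBes s hsI).trans
              (div_le_div_of_nonneg_left hm (Real.rpow_pos_of_pos (jt_pos _) _) hjs)
      _ = C₀ * m / jt (t / 2) ^ ((d : ℝ) + a) * (1 + (t - s)) ^ (a - 1) := by ring
  have hhalf := inv_half_rpow_add_one_mul_half_le (d := d) d.cast_nonneg ht
  have hlate := one_add_half_rpow_div_jt_half_rpow_le (d := d) d.cast_nonneg ha0.le ht0.le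
  refine (abs_intervalIntegral_le_of_near_far ht0 ha0 (by positivity)
    (div_nonneg (by positivity) (Real.rpow_nonneg (jt_pos _).le _)) hnear hfar).trans ?_
  calc C₀ * m * ((t / 2) ^ ((d : ℝ) + 1))⁻¹ * (t / 2)
        + C₀ * m / jt (t / 2) ^ ((d : ℝ) + a) * (1 + t / 2) ^ a / a
      = C₀ * m * (((t / 2) ^ ((d : ℝ) + 1))⁻¹ * (t / 2))
        + C₀ * m * ((1 + t / 2) ^ a / jt (t / 2) ^ ((d : ℝ) + a)) / a := by ring
    _ ≤ C₀ * m * (4 ^ (d : ℝ) / jt t ^ (d : ℝ))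
        + C₀ * m * (2 ^ ((d : ℝ) + a) / jt t ^ (d : ℝ)) / a := by gcongr
    _ = C₀ * (4 ^ (d : ℝ) + 2 ^ ((d : ℝ) + a) / a) * m / jt t ^ (d : ℝ) := by ring

theorem stConv_Linfty_decay_general (d : ℕ) (a : ℝ) (ha0 : 0 < a) (ha1 : a < 1)
    (C₀ : ℝ) (hC₀ : 0 < C₀) :
    ∃ C : ℝ, 0 < C ∧
      ∀ G : ℝ → Ed d → ℝ,
        (∀ t : ℝ, 0 < t →
          Integrable (G t) ∧ (∫ x : Ed d, G t x) = 0 ∧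
          eLpNorm (G t) ⊤ volume
            ≤ ENNReal.ofReal (C₀ * t ^ (-((d : ℝ) - 1)) * (1 + t) ^ (-2 : ℝ)) ∧
          (∫⁻ x : Ed d, ENNReal.ofReal (‖x‖ ^ a * |G t x|))
            ≤ ENNReal.ofReal (C₀ * (1 + t) ^ (a - 1))) →
      ∀ t : ℝ, 1 ≤ t →
      ∀ h : ℝ → Ed d → ℝ,
        (∀ s ∈ Set.Icc (0 : ℝ) t, Integrable (h s) ∧ besov a ⊤ (h s) < ⊤) →
        ENNReal.ofReal (jt t ^ (d : ℝ)) * eLpNorm (stConv d G h t) ⊤ volume ≤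
          ENNReal.ofReal C *
            ⨆ s ∈ Set.Icc (0 : ℝ) t,
              (eLpNorm (h s) 1 volume
                + ENNReal.ofReal (jt s ^ ((d : ℝ) + a)) * besov a ⊤ (h s)) := by
  set C := C₀ * (4 ^ (d : ℝ) + 2 ^ ((d : ℝ) + a) / a)
  refine ⟨C, by positivity, fun G hG t ht h hh => ?_⟩
  set M := ⨆ s ∈ Icc (0 : ℝ) t,
    (eLpNorm (h s) 1 volume + ENNReal.ofReal (jt s ^ ((d : ℝ) + a)) * besov a ⊤ (h s))
  rcases eq_or_ne M ⊤ with hM | hM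
  · rw [hM, ENNReal.mul_top (ENNReal.ofReal_pos.2 (by positivity)).ne']
    exact le_top
  have hle : ∀ s ∈ Icc 0 t, eLpNorm (h s) 1 volume
      + ENNReal.ofReal (jt s ^ ((d : ℝ) + a)) * besov a ⊤ (h s) ≤ M := fun s hs =>
    le_biSup (fun s => eLpNorm (h s) 1 volume
      + ENNReal.ofReal (jt s ^ ((d : ℝ) + a)) * besov a ⊤ (h s)) hs
  have hjt : 0 < jt t ^ (d : ℝ) := Real.rpow_pos_of_pos (jt_pos t) _
  have hbound := abs_stConv_le ha0 ha1.le hC₀.le hG ht hh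
    (fun s hs => integral_abs_le_toReal_of_eLpNorm_one_le (hh s hs).1 hM
      (le_self_add.trans (hle s hs)))
    (fun s hs => ENNReal.toReal_le_div_of_ofReal_mul_le (Real.rpow_pos_of_pos (jt_pos s) _) hM
      (le_add_self.trans (hle s hs)))
  calc ENNReal.ofReal (jt t ^ (d : ℝ)) * eLpNorm (stConv d G h t) ⊤ volume
      ≤ ENNReal.ofReal (jt t ^ (d : ℝ)) * ENNReal.ofReal (C * M.toReal / jt t ^ (d : ℝ)) := by
        rw [eLpNorm_exponent_top]
        gcongr
        exact eLpNormEssSup_le_of_ae_bound (ae_of_all _ hbound)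
    _ = ENNReal.ofReal C * M := by
        rw [← ENNReal.ofReal_mul hjt.le, mul_div_cancel₀ _ hjt.ne',
          ENNReal.ofReal_mul (by positivity), ENNReal.ofReal_toReal hM]

/-- part of Lemma 5.2: dispersive `L^∞` bound for the space-time
convolution with a mean-zero kernel. -/
theorem stConv_Linfty_decay (d : ℕ) (hd : 3 ≤ d) (a : ℝ) (ha0 : 0 < a) (ha1 : a < 1)
    (C₀ : ℝ) (hC₀ : 0 < C₀) :
    ∃ C : ℝ, 0 < C ∧
      ∀ G : ℝ → Ed d → ℝ,
        (∀ t : ℝ, 0 < t →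
          Integrable (G t) ∧ (∫ x : Ed d, G t x) = 0 ∧
          eLpNorm (G t) ⊤ volume
            ≤ ENNReal.ofReal (C₀ * t ^ (-((d : ℝ) - 1)) * (1 + t) ^ (-2 : ℝ)) ∧
          (∫⁻ x : Ed d, ENNReal.ofReal (‖x‖ ^ a * |G t x|))
            ≤ ENNReal.ofReal (C₀ * (1 + t) ^ (a - 1))) →
      ∀ t : ℝ, 1 ≤ t →
      ∀ h : ℝ → Ed d → ℝ,
        (∀ s ∈ Set.Icc (0 : ℝ) t, Integrable (h s) ∧ besov a ⊤ (h s) < ⊤) →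
        ENNReal.ofReal (jt t ^ (d : ℝ)) * eLpNorm (stConv d G h t) ⊤ volume ≤
          ENNReal.ofReal C *
            ⨆ s ∈ Set.Icc (0 : ℝ) t,
              (eLpNorm (h s) 1 volume
                + ENNReal.ofReal (jt s ^ ((d : ℝ) + a)) * besov a ⊤ (h s)) :=
  stConv_Linfty_decay_general d a ha0 ha1 C₀ hC₀
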